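/- Let G be an ordered mean and 𝔸 = [Aᵢⱼ] an n×k array of positive definite operators with mI ≤ Aᵢⱼ ≤ MI. Then for any t > 0 and probability vectors ω ∈ Δₙ, λ ∈ Δₖ: Gₙ(ω; Gₖ(λ; 𝔸¹), …, Gₖ(λ; 𝔸ⁿ)) ≤ t·Gₖ(λ; Gₙ(ω; 𝔸₁), …, Gₙ(ω; 𝔸ₖ)) + ρ_{M,m}(t)·I, where ρ_{M,m}(t) = (1−t)m if t ≥ M/m, M + m − 2√(tMm) if m/M ≤ t ≤ M/m, and (1−t)M if t ≤ m/M. -/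

import Mathlib

open ContinuousLinearMap in
/-- A positive definite (positive invertible) bounded operator on a Hilbert space. -/
def IsPosDef {H : Type*} [NormedAddCommGroup H] [InnerProductSpace ℂ H] [CompleteSpace H]
    (A : H →L[ℂ] H) : Prop := A.IsPositive ∧ IsUnit A

/-- A positive probability vector. -/
def IsProbVec {n : ℕ} (w : Fin n → ℝ) : Prop := (∀ i, 0 < w i) ∧ ∑ i, w i = 1

/-- An ordered mean: a family of weighted means of positive definite operators satisfying
homogeneity, monotonicity, joint concavity and the arithmetic-`G`-harmonic mean inequalities
with respect to the Loewner order. -/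
structure OrderedMean (H : Type*) [NormedAddCommGroup H] [InnerProductSpace ℂ H]
    [CompleteSpace H] where
  G : ∀ n : ℕ, (Fin n → ℝ) → (Fin n → (H →L[ℂ] H)) → (H →L[ℂ] H)
  posDef : ∀ n w A, IsProbVec w → (∀ i, IsPosDef (A i)) → IsPosDef (G n w A)
  homog : ∀ n w A (a : ℝ), IsProbVec w → (∀ i, IsPosDef (A i)) → 0 < a →
    G n w (fun i => a • A i) = a • G n w A
  mono : ∀ n w A B, IsProbVec w → (∀ i, IsPosDef (A i)) → (∀ i, IsPosDef (B i)) →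
    (∀ i, B i ≤ A i) → G n w B ≤ G n w A
  concave : ∀ n w A B (s : ℝ), IsProbVec w → (∀ i, IsPosDef (A i)) → (∀ i, IsPosDef (B i)) →
    0 ≤ s → s ≤ 1 →
    (1 - s) • G n w A + s • G n w B ≤ G n w (fun i => (1 - s) • A i + s • B i)
  harm_le : ∀ n w A, IsProbVec w → (∀ i, IsPosDef (A i)) →
    Ring.inverse (∑ i, w i • Ring.inverse (A i)) ≤ G n w A
  le_arith : ∀ n w A, IsProbVec w → (∀ i, IsPosDef (A i)) →
    G n w A ≤ ∑ i, w i • A i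

/-- The parameterized ordered mean `G^μ`. -/
noncomputable def OrderedMean.pMean {H : Type*} [NormedAddCommGroup H] [InnerProductSpace ℂ H]
    [CompleteSpace H] (G : OrderedMean H) (μ : ℝ) (n : ℕ) (w : Fin n → ℝ)
    (A : Fin n → (H →L[ℂ] H)) : H →L[ℂ] H :=
  if 0 ≤ μ then G.G n w (fun i => A i + μ • 1) - μ • 1
  else Ring.inverse (G.G n w (fun i => Ring.inverse (A i) + (-μ) • 1) - (-μ) • 1)

/-- The constant `ρ_{M,m}(t)`. -/
noncomputable def rhoConst (M m t : ℝ) : ℝ :=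
  if M / m ≤ t then (1 - t) * m
  else if t ≤ m / M then (1 - t) * M
  else M + m - 2 * Real.sqrt (t * M * m)

variable {H : Type*} [NormedAddCommGroup H] [InnerProductSpace ℂ H] [CompleteSpace H]

/-!
By `G ≤` arithmetic mean and monotonicity, the left side is at most the total arithmetic mean
`𝒜 = ∑ᵢ ∑ⱼ wᵢ lⱼ Aᵢⱼ`; by harmonic mean `≤ G`, the mean on the right is at least `T⁻¹`, where
`T = ∑ⱼ ∑ᵢ lⱼ wᵢ Aᵢⱼ⁻¹`. Entrywise, `m ≤ Aᵢⱼ ≤ M` gives `Aᵢⱼ + M m Aᵢⱼ⁻¹ ≤ M + m`, so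
`𝒜 ≤ (M + m) - M m T` with `M⁻¹ ≤ T ≤ m⁻¹`. Finally `ρ_{M,m}(t)` is the maximum of
`M + m - M m x - t / x` over `x ∈ [M⁻¹, m⁻¹]`, and the functional calculus transfers this scalar
bound to `T`.
-/

open Ring

section ConvexCombination

variable {E : Type*} [AddCommGroup E] [PartialOrder E] [IsOrderedAddMonoid E] [Module ℝ E]
  [PosSMulMono ℝ E] {n : ℕ} {w : Fin n → ℝ} {B : Fin n → E} {C : E}

lemma IsProbVec.sum_smul_le (hw : IsProbVec w) (h : ∀ i, B i ≤ C) : ∑ i, w i • B i ≤ C :=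
  (convex_Iic C).sum_mem (fun i _ => (hw.1 i).le) hw.2 fun i _ => h i

lemma IsProbVec.le_sum_smul (hw : IsProbVec w) (h : ∀ i, C ≤ B i) : C ≤ ∑ i, w i • B i :=
  (convex_Ici C).sum_mem (fun i _ => (hw.1 i).le) hw.2 fun i _ => h i

end ConvexCombination

section CStarAlgebra

variable {A : Type*} [CStarAlgebra A] [PartialOrder A] [StarOrderedRing A]

lemma IsProbVec.isStrictlyPositive_sum_smul {n : ℕ} {w : Fin n → ℝ} (hw : IsProbVec w)
    {B : Fin n → A} (hB : ∀ i, IsStrictlyPositive (B i)) :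
    IsStrictlyPositive (∑ i, w i • B i) := by
  obtain ⟨i₀⟩ : Nonempty (Fin n) :=
    Finset.univ_nonempty_iff.mp (Finset.nonempty_of_sum_ne_zero (hw.2 ▸ one_ne_zero))
  rw [← Finset.add_sum_erase _ _ (Finset.mem_univ i₀)]
  exact ((hB i₀).smul (hw.1 i₀)).add_nonneg
    (Finset.sum_nonneg fun i _ => smul_nonneg (hw.1 i).le (hB i).nonneg)

lemma spectrum_subset_Icc_of_smul_one_le {a : A} {α β : ℝ} (h₁ : α • 1 ≤ a) (h₂ : a ≤ β • 1) :
    spectrum ℝ a ⊆ Set.Icc α β := by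
  rw [← Algebra.algebraMap_eq_smul_one] at h₁ h₂
  have ha : IsSelfAdjoint a := by
    simpa using (IsSelfAdjoint.of_nonneg (sub_nonneg.mpr h₁)).add (.algebraMap A (.all α))
  exact fun x hx => ⟨(algebraMap_le_iff_le_spectrum ha).mp h₁ x hx,
    (le_algebraMap_iff_spectrum_le ha).mp h₂ x hx⟩

lemma cfc_const_mul_inv_add_const_mul {a : A} (ha : IsStrictlyPositive a) (c₁ c₂ : ℝ) :
    cfc (fun x : ℝ => c₁ * x⁻¹ + c₂ * x) a = c₁ • a⁻¹ʳ + c₂ • a := by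
  have hinv : ContinuousOn (fun x : ℝ => x⁻¹) (spectrum ℝ a) :=
    continuousOn_inv₀.mono fun x hx => (ha.spectrum_pos hx).ne'
  rw [cfc_add a (fun x => c₁ * x⁻¹) (fun x => c₂ * x) (continuousOn_const.mul hinv),
    cfc_const_mul _ _ a hinv, cfc_const_mul_id c₂ a, cfc_ringInverse_id a ha.isUnit]

variable {a : A} {α β : ℝ}

lemma smul_ringInverse_add_smul_le_smul_one (hα : 0 < α) (h₁ : α • 1 ≤ a) (h₂ : a ≤ β • 1)
    {c₁ c₂ c₃ : ℝ} (h : ∀ x ∈ Set.Icc α β, c₁ * x⁻¹ + c₂ * x ≤ c₃) :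
    c₁ • a⁻¹ʳ + c₂ • a ≤ c₃ • 1 := by
  have ha : IsStrictlyPositive a := (IsStrictlyPositive.smul hα isStrictlyPositive_one).of_le h₁
  have hspec := spectrum_subset_Icc_of_smul_one_le h₁ h₂
  rw [← cfc_const_mul_inv_add_const_mul ha, ← Algebra.algebraMap_eq_smul_one]
  exact cfc_le_algebraMap _ _ a (fun x hx => h x (hspec hx))
    ((continuousOn_const.mul continuousOn_inv₀).add (continuousOn_const.mul continuousOn_id) |>.mono
      fun x hx => (hα.trans_le (hspec hx).1).ne')

lemma smul_one_le_smul_ringInverse_add_smul (hα : 0 < α) (h₁ : α • 1 ≤ a) (h₂ : a ≤ β • 1)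
    {c₁ c₂ c₃ : ℝ} (h : ∀ x ∈ Set.Icc α β, c₃ ≤ c₁ * x⁻¹ + c₂ * x) :
    c₃ • 1 ≤ c₁ • a⁻¹ʳ + c₂ • a := by
  have ha : IsStrictlyPositive a := (IsStrictlyPositive.smul hα isStrictlyPositive_one).of_le h₁
  have hspec := spectrum_subset_Icc_of_smul_one_le h₁ h₂
  rw [← cfc_const_mul_inv_add_const_mul ha, ← Algebra.algebraMap_eq_smul_one]
  exact algebraMap_le_cfc _ _ a (fun x hx => h x (hspec hx))
    ((continuousOn_const.mul continuousOn_inv₀).add (continuousOn_const.mul continuousOn_id) |>.mono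
      fun x hx => (hα.trans_le (hspec hx).1).ne')

lemma smul_one_le_ringInverse (hα : 0 < α) (h₁ : α • 1 ≤ a) (h₂ : a ≤ β • 1) :
    β⁻¹ • 1 ≤ a⁻¹ʳ := by
  simpa using smul_one_le_smul_ringInverse_add_smul (c₁ := 1) (c₂ := 0) hα h₁ h₂
    fun x hx => by simpa using inv_anti₀ (hα.trans_le hx.1) hx.2

lemma ringInverse_le_smul_one (hα : 0 < α) (h₁ : α • 1 ≤ a) (h₂ : a ≤ β • 1) :
    a⁻¹ʳ ≤ α⁻¹ • 1 := by
  simpa using smul_ringInverse_add_smul_le_smul_one (c₁ := 1) (c₂ := 0) hα h₁ h₂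
    fun x hx => by simpa using inv_anti₀ hα hx.1

lemma add_smul_ringInverse_le {m M : ℝ} (hm : 0 < m) (h₁ : m • 1 ≤ a) (h₂ : a ≤ M • 1) :
    a + (M * m) • a⁻¹ʳ ≤ (M + m) • 1 := by
  have key : ∀ x ∈ Set.Icc m M, M * m * x⁻¹ + 1 * x ≤ M + m := fun x hx => by
    have hx₀ : 0 < x := hm.trans_le hx.1
    have : M + m - (M * m * x⁻¹ + 1 * x) = (x - m) * (M - x) / x := by field_simp; ring
    linarith [div_nonneg (mul_nonneg (sub_nonneg.2 hx.1) (sub_nonneg.2 hx.2)) hx₀.le]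
  simpa [add_comm] using smul_ringInverse_add_smul_le_smul_one hm h₁ h₂ key

lemma sub_rhoConst_le {m M t x : ℝ} (hm : 0 < m) (hmM : m ≤ M) (hx : x ∈ Set.Icc M⁻¹ m⁻¹) :
    M + m - rhoConst M m t ≤ t * x⁻¹ + M * m * x := by
  have hM : 0 < M := hm.trans_le hmM
  have hx₀ : 0 < x := (inv_pos.2 hM).trans_le hx.1
  have hmx : m * x ≤ 1 := by simpa [hm.ne'] using mul_le_mul_of_nonneg_left hx.2 hm.le
  have hMx : 1 ≤ M * x := by simpa [hM.ne'] using mul_le_mul_of_nonneg_left hx.1 hM.le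
  suffices h : (M + m - rhoConst M m t) * x ≤ t + M * m * x * x by
    have hdiv : t * x⁻¹ + M * m * x = (t + M * m * x * x) / x := by field_simp
    rwa [hdiv, le_div_iff₀ hx₀]
  unfold rhoConst
  split_ifs with h₁ h₂
  · have : M * x ≤ t := le_trans (by rw [div_eq_mul_inv]; gcongr; exact hx.2) h₁
    nlinarith [mul_nonneg (sub_nonneg.2 hmx) (sub_nonneg.2 this)]
  · have : t ≤ m * x := h₂.trans (by rw [div_eq_mul_inv]; gcongr; exact hx.1)
    nlinarith [mul_nonneg (sub_nonneg.2 hMx) (sub_nonneg.2 this)]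
  · have ht : 0 < t := lt_of_lt_of_le (by positivity) (not_le.1 h₂).le
    have hsq : √(t * M * m) = √t * √(M * m) := by rw [mul_assoc, Real.sqrt_mul ht.le]
    have hexp : (√t - √(M * m) * x) ^ 2 = t - 2 * √(t * M * m) * x + M * m * x * x := by
      rw [hsq, sub_sq, mul_pow, Real.sq_sqrt ht.le, Real.sq_sqrt (by positivity)]
      ring
    nlinarith [sq_nonneg (√t - √(M * m) * x)]

lemma smul_one_sub_smul_le_smul_ringInverse_add {m M : ℝ} (hm : 0 < m) (hmM : m ≤ M) (t : ℝ)
    (h₁ : M⁻¹ • 1 ≤ a) (h₂ : a ≤ m⁻¹ • 1) :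
    (M + m) • 1 - (M * m) • a ≤ t • a⁻¹ʳ + rhoConst M m t • 1 := by
  have h := smul_one_le_smul_ringInverse_add_smul (inv_pos.2 (hm.trans_le hmM)) h₁ h₂
    fun x hx => sub_rhoConst_le (t := t) hm hmM hx
  rw [sub_smul, sub_le_iff_le_add] at h
  rw [sub_le_iff_le_add]
  exact h.trans_eq (add_right_comm _ _ _)

end CStarAlgebra

lemma isPosDef_iff_isStrictlyPositive {a : H →L[ℂ] H} : IsPosDef a ↔ IsStrictlyPositive a := by
  rw [IsStrictlyPositive.iff_of_unital, ContinuousLinearMap.nonneg_iff_isPositive]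
  rfl

section Array

variable {n k : ℕ} {w : Fin n → ℝ} {l : Fin k → ℝ} {A : Fin n → Fin k → (H →L[ℂ] H)}

lemma sum_sum_le_smul_ringInverse_sum_sum_add {m M : ℝ} (hm : 0 < m) (hmM : m ≤ M) (t : ℝ)
    (hw : IsProbVec w) (hl : IsProbVec l) (hbd : ∀ i j, m • 1 ≤ A i j ∧ A i j ≤ M • 1) :
    ∑ i, w i • ∑ j, l j • A i j ≤
      t • (∑ j, l j • ∑ i, w i • (A i j)⁻¹ʳ)⁻¹ʳ + rhoConst M m t • 1 := by
  set T := ∑ j, l j • ∑ i, w i • (A i j)⁻¹ʳ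
  have hT₁ : M⁻¹ • 1 ≤ T := hl.le_sum_smul fun j => hw.le_sum_smul fun i =>
    smul_one_le_ringInverse hm (hbd i j).1 (hbd i j).2
  have hT₂ : T ≤ m⁻¹ • 1 := hl.sum_smul_le fun j => hw.sum_smul_le fun i =>
    ringInverse_le_smul_one hm (hbd i j).1 (hbd i j).2
  have hsplit : ∑ i, w i • ∑ j, l j • (A i j + (M * m) • (A i j)⁻¹ʳ) =
      ∑ i, w i • ∑ j, l j • A i j + (M * m) • T := by
    simp only [T, smul_add, Finset.sum_add_distrib, Finset.smul_sum]
    congr 1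
    rw [Finset.sum_comm]
    exact Finset.sum_congr rfl fun j _ => Finset.sum_congr rfl fun i _ => by module
  have hK : ∑ i, w i • ∑ j, l j • A i j + (M * m) • T ≤ (M + m) • 1 := by
    rw [← hsplit]
    exact hw.sum_smul_le fun i => hl.sum_smul_le fun j =>
      add_smul_ringInverse_le hm (hbd i j).1 (hbd i j).2
  calc ∑ i, w i • ∑ j, l j • A i j ≤ (M + m) • 1 - (M * m) • T := le_sub_iff_add_le.mpr hK
    _ ≤ t • T⁻¹ʳ + rhoConst M m t • 1 := smul_one_sub_smul_le_smul_ringInverse_add hm hmM t hT₁ hT₂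

end Array

namespace OrderedMean

variable (G : OrderedMean H) {n k : ℕ} {w : Fin n → ℝ} {l : Fin k → ℝ}
  {A : Fin n → Fin k → (H →L[ℂ] H)}

lemma G_G_le_sum_sum (hw : IsProbVec w) (hl : IsProbVec l) (hA : ∀ i j, IsPosDef (A i j)) :
    G.G n w (fun i => G.G k l (A i)) ≤ ∑ i, w i • ∑ j, l j • A i j := by
  have hrow : ∀ i, IsPosDef (∑ j, l j • A i j) := fun i => isPosDef_iff_isStrictlyPositive.2 <|
    hl.isStrictlyPositive_sum_smul fun j => isPosDef_iff_isStrictlyPositive.1 (hA i j)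
  calc G.G n w (fun i => G.G k l (A i)) ≤ G.G n w (fun i => ∑ j, l j • A i j) :=
        G.mono n w _ _ hw hrow (fun i => G.posDef k l _ hl (hA i))
          fun i => G.le_arith k l _ hl (hA i)
    _ ≤ ∑ i, w i • ∑ j, l j • A i j := G.le_arith n w _ hw hrow

lemma ringInverse_sum_sum_le_G_G (hw : IsProbVec w) (hl : IsProbVec l)
    (hA : ∀ i j, IsPosDef (A i j)) :
    (∑ j, l j • ∑ i, w i • (A i j)⁻¹ʳ)⁻¹ʳ ≤ G.G k l (fun j => G.G n w (fun i => A i j)) := by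
  have hcol : ∀ j, IsStrictlyPositive (∑ i, w i • (A i j)⁻¹ʳ) := fun j =>
    hw.isStrictlyPositive_sum_smul fun i => (isPosDef_iff_isStrictlyPositive.1 (hA i j)).ringInverse
  have hharm : ∀ j, IsPosDef (∑ i, w i • (A i j)⁻¹ʳ)⁻¹ʳ := fun j =>
    isPosDef_iff_isStrictlyPositive.2 (hcol j).ringInverse
  calc (∑ j, l j • ∑ i, w i • (A i j)⁻¹ʳ)⁻¹ʳ
      = (∑ j, l j • (∑ i, w i • (A i j)⁻¹ʳ)⁻¹ʳ⁻¹ʳ)⁻¹ʳ := by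
        simp only [Ring.inverse_inverse (hcol _).isUnit]
    _ ≤ G.G k l (fun j => (∑ i, w i • (A i j)⁻¹ʳ)⁻¹ʳ) := G.harm_le k l _ hl hharm
    _ ≤ G.G k l (fun j => G.G n w (fun i => A i j)) :=
        G.mono k l _ _ hl (fun j => G.posDef n w _ hw fun i => hA i j) hharm
          fun j => G.harm_le n w _ hw fun i => hA i j

end OrderedMean

theorem mixture_rho_bound (G : OrderedMean H) {n k : ℕ} (w : Fin n → ℝ) (l : Fin k → ℝ)
    (hw : IsProbVec w) (hl : IsProbVec l) (A : Fin n → Fin k → (H →L[ℂ] H))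
    (hA : ∀ i j, IsPosDef (A i j)) (m M : ℝ) (hm : 0 < m) (hmM : m ≤ M)
    (hbd : ∀ i j, m • (1 : H →L[ℂ] H) ≤ A i j ∧ A i j ≤ M • (1 : H →L[ℂ] H)) (t : ℝ) (ht : 0 < t) :
    G.G n w (fun i => G.G k l (A i)) ≤
      t • G.G k l (fun j => G.G n w (fun i => A i j)) + rhoConst M m t • (1 : H →L[ℂ] H) := by
  calc G.G n w (fun i => G.G k l (A i)) ≤ ∑ i, w i • ∑ j, l j • A i j :=
        G.G_G_le_sum_sum hw hl hA
    _ ≤ t • (∑ j, l j • ∑ i, w i • (A i j)⁻¹ʳ)⁻¹ʳ + rhoConst M m t • 1 :=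
        sum_sum_le_smul_ringInverse_sum_sum_add hm hmM t hw hl hbd
    _ ≤ t • G.G k l (fun j => G.G n w (fun i => A i j)) + rhoConst M m t • 1 := by
        gcongr
        exact G.ringInverse_sum_sum_le_G_G hw hl hA
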